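/- For every positive integer n, as integers, E₀(n) − E₁(n) equals 2 if n is a perfect square and equals 0 otherwise, where E₀(n) (respectively E₁(n)) is the number of two-color partitions of n counted by E(n) whose number of even parts is even (respectively odd). -/

import Mathlib

/-!
`E₀(n) - E₁(n)` is the coefficient of `qⁿ` in `∏ₖ (1 + q^(2k+1))² (1 - q^(2k+2))`: one factor
`1 + q^(2k+1)` for green parts, and for blue parts the other one together with `1 - q^(2k+2)`, whose
sign records the parity of the number of even parts. By the Jacobi triple product at `z = 1` this
product is `∑_{j ∈ ℤ} q^(j²)`, whose coefficient of `qⁿ`, `n > 0`, is `2` or `0` as `n` is a square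
or not. We use the finite form: Cauchy's `q`-binomial theorem gives
`∏_{k<m} (1 + q^(2k+1))² = ∑_{k ≤ 2m} [2m choose k]_{q²} q^((k-m)²)`, and
`[k+l choose k]_{q²} (q²;q²)_m ≡ 1` modulo `q^(2s+2)` whenever `s ≤ k, l, m`.
-/

open Polynomial Finset

section GaussianBinomial

variable {R : Type*} [CommRing R]

def gaussBinomial (p : R) : ℕ → ℕ → R
  | _, 0 => 1
  | 0, _ + 1 => 0
  | n + 1, k + 1 => gaussBinomial p n k + p ^ (k + 1) * gaussBinomial p n (k + 1)

/-- `(p; p)_n`. -/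
def qPochhammer (p : R) (n : ℕ) : R := ∏ i ∈ range n, (1 - p ^ (i + 1))

variable (p : R)

@[simp] lemma gaussBinomial_zero_right (n : ℕ) : gaussBinomial p n 0 = 1 := by
  cases n <;> rfl

lemma gaussBinomial_succ_succ (n k : ℕ) :
    gaussBinomial p (n + 1) (k + 1) =
      gaussBinomial p n k + p ^ (k + 1) * gaussBinomial p n (k + 1) := rfl

lemma gaussBinomial_eq_zero_of_lt : ∀ {n k : ℕ}, n < k → gaussBinomial p n k = 0
  | 0, _ + 1, _ => rfl
  | n + 1, k + 1, h => by
    rw [gaussBinomial_succ_succ, gaussBinomial_eq_zero_of_lt (by omega),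
      gaussBinomial_eq_zero_of_lt (by omega), mul_zero, add_zero]

@[simp] lemma gaussBinomial_self : ∀ n : ℕ, gaussBinomial p n n = 1
  | 0 => rfl
  | n + 1 => by
    rw [gaussBinomial_succ_succ, gaussBinomial_self n,
      gaussBinomial_eq_zero_of_lt p (Nat.lt_succ_self n), mul_zero, add_zero]

@[simp] lemma qPochhammer_zero : qPochhammer p 0 = 1 := prod_range_zero _

lemma qPochhammer_succ (n : ℕ) :
    qPochhammer p (n + 1) = qPochhammer p n * (1 - p ^ (n + 1)) := prod_range_succ _ _

lemma gaussBinomial_mul_qPochhammer_mul_qPochhammer (k l : ℕ) :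
    gaussBinomial p (k + l) k * qPochhammer p k * qPochhammer p l = qPochhammer p (k + l) := by
  induction k generalizing l with
  | zero => simp
  | succ k ihk =>
    induction l with
    | zero => simp
    | succ l ihl =>
      have h₁ := ihk (l + 1)
      rw [← add_assoc, qPochhammer_succ p l] at h₁
      rw [Nat.add_right_comm, qPochhammer_succ p k] at ihl
      rw [show k + 1 + (l + 1) = k + l + 1 + 1 by ring, gaussBinomial_succ_succ,
        qPochhammer_succ p (k + l + 1), qPochhammer_succ p k, qPochhammer_succ p l]
      linear_combination (1 - p ^ (k + 1)) * h₁ + p ^ (k + 1) * (1 - p ^ (l + 1)) * ihl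

/-- Cauchy's `q`-binomial theorem, in homogeneous form. -/
theorem prod_add_pow_mul_eq_sum_gaussBinomial (x y : R) (n : ℕ) :
    ∏ i ∈ range n, (x + p ^ i * y) =
      ∑ k ∈ range (n + 1), gaussBinomial p n k * p ^ k.choose 2 * x ^ (n - k) * y ^ k := by
  induction n generalizing y with
  | zero => simp
  | succ n ih =>
    set S : ℕ → R := fun k => gaussBinomial p n k * p ^ k.choose 2 * x ^ (n - k) * (p * y) ^ k
    have hS : S (n + 1) = 0 := by simp [S, gaussBinomial_eq_zero_of_lt p (Nat.lt_succ_self n)]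
    have hterm : ∀ k ∈ range (n + 1),
        gaussBinomial p (n + 1) (k + 1) * p ^ (k + 1).choose 2 * x ^ (n + 1 - (k + 1)) *
          y ^ (k + 1) = y * S k + x * S (k + 1) := by
      intro k hk
      rcases (Nat.lt_succ_iff.mp (mem_range.mp hk)).lt_or_eq with hkn | rfl
      · obtain ⟨r, rfl⟩ := Nat.exists_eq_add_of_lt hkn
        simp only [S, gaussBinomial_succ_succ, Nat.choose_succ_succ', Nat.choose_one_right,
          show k + r + 1 + 1 - (k + 1) = r + 1 by omega, show k + r + 1 - k = r + 1 by omega,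
          show k + r + 1 - (k + 1) = r by omega]
        ring
      · simp only [S, gaussBinomial_succ_succ, gaussBinomial_eq_zero_of_lt p (Nat.lt_succ_self k),
          Nat.choose_succ_succ', Nat.choose_one_right, Nat.sub_self]
        ring
    have hshift : ∑ k ∈ range (n + 1), S (k + 1) = ∑ k ∈ range (n + 1), S k - S 0 := by
      rw [eq_sub_iff_add_eq, ← sum_range_succ', sum_range_succ, hS, add_zero]
    have hprod : ∏ k ∈ range n, (x + p ^ (k + 1) * y) = ∏ k ∈ range n, (x + p ^ k * (p * y)) :=
      prod_congr rfl fun k _ => by ring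
    rw [prod_range_succ', hprod, ih (p * y), sum_range_succ' _ (n + 1), sum_congr rfl hterm,
      sum_add_distrib, ← mul_sum, ← mul_sum, hshift]
    simp [S]
    ring

lemma pow_succ_dvd_qPochhammer_sub {s a b : ℕ} (ha : s ≤ a) (hb : s ≤ b) :
    p ^ (s + 1) ∣ qPochhammer p a - qPochhammer p b := by
  have key : ∀ e, p ^ (s + 1) ∣ qPochhammer p (s + e) - qPochhammer p s := by
    intro e
    induction e with
    | zero => simp
    | succ e ih =>
      rw [← add_assoc, qPochhammer_succ,
        show qPochhammer p (s + e) * (1 - p ^ (s + e + 1)) - qPochhammer p s =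
          (qPochhammer p (s + e) - qPochhammer p s) - qPochhammer p (s + e) * p ^ (s + e + 1) by
            ring]
      exact dvd_sub ih (dvd_mul_of_dvd_right (pow_dvd_pow p (by omega)) _)
  obtain ⟨a, rfl⟩ := Nat.exists_eq_add_of_le ha
  obtain ⟨b, rfl⟩ := Nat.exists_eq_add_of_le hb
  simpa using dvd_sub (key a) (key b)

lemma isCoprime_qPochhammer (n : ℕ) : IsCoprime p (qPochhammer p n) := by
  obtain ⟨w, hw⟩ := pow_succ_dvd_qPochhammer_sub p (Nat.zero_le n) le_rfl
  rw [zero_add, pow_one, qPochhammer_zero] at hw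
  exact ⟨-w, 1, by linear_combination hw⟩

/-- Multiply by `(p;p)_k (p;p)_l`, which is prime to `p`, and use that `(p;p)_a ≡ (p;p)_b` modulo
`p ^ (s + 1)` for `s ≤ a, b`. -/
lemma pow_succ_dvd_gaussBinomial_mul_qPochhammer_sub_one {s k l M : ℕ} (hk : s ≤ k) (hl : s ≤ l)
    (hM : s ≤ M) : p ^ (s + 1) ∣ gaussBinomial p (k + l) k * qPochhammer p M - 1 := by
  have hcop : IsCoprime (p ^ (s + 1)) (qPochhammer p k * qPochhammer p l) :=
    ((isCoprime_qPochhammer p k).mul_right (isCoprime_qPochhammer p l)).pow_left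
  refine hcop.dvd_of_dvd_mul_left ?_
  rw [show qPochhammer p k * qPochhammer p l * (gaussBinomial p (k + l) k * qPochhammer p M - 1) =
      qPochhammer p M * (qPochhammer p (k + l) - qPochhammer p k) +
        qPochhammer p k * (qPochhammer p M - qPochhammer p l) by
    rw [← gaussBinomial_mul_qPochhammer_mul_qPochhammer]; ring]
  exact dvd_add (dvd_mul_of_dvd_right (pow_succ_dvd_qPochhammer_sub p (by omega) hk) _)
    (dvd_mul_of_dvd_right (pow_succ_dvd_qPochhammer_sub p hM hl) _)

lemma two_mul_choose_two_add_self (k : ℕ) : 2 * k.choose 2 + k = k ^ 2 := by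
  induction k with
  | zero => rfl
  | succ k ih => rw [Nat.choose_succ_succ', Nat.choose_one_right]; nlinarith

lemma sum_range_two_mul_add_one (m : ℕ) : ∑ i ∈ range m, (2 * i + 1) = m ^ 2 := by
  induction m with
  | zero => rfl
  | succ m ih => rw [sum_range_succ, ih]; ring

/-- A finite form of the Jacobi triple product at `z = 1`: Cauchy's theorem with `p = q ^ 2`,
`x = q ^ (2 * m)` and `y = q`, after pulling `q ^ (2 * i + 1)` out of the first `m` factors; the
exponent `k ^ 2 + 2 * m * (2 * m - k)` is `(k - m) ^ 2 + 3 * m ^ 2`. -/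
theorem pow_mul_prod_one_add_sq_eq_sum_gaussBinomial (q : R) (m : ℕ) :
    q ^ (3 * m ^ 2) * (∏ j ∈ range m, (1 + q ^ (2 * j + 1))) ^ 2 =
      ∑ k ∈ range (2 * m + 1),
        gaussBinomial (q ^ 2) (2 * m) k * q ^ (k ^ 2 + 2 * m * (2 * m - k)) := by
  have hlow : ∏ i ∈ range m, (q ^ (2 * m) + (q ^ 2) ^ i * q) =
      q ^ m ^ 2 * ∏ j ∈ range m, (1 + q ^ (2 * j + 1)) := by
    rw [← prod_range_reflect (fun j => 1 + q ^ (2 * j + 1)), ← sum_range_two_mul_add_one,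
      ← prod_pow_eq_pow_sum, ← prod_mul_distrib]
    refine prod_congr rfl fun i hi => ?_
    have hi := mem_range.mp hi
    rw [show 2 * m = 2 * i + 1 + (2 * (m - 1 - i) + 1) by omega]
    ring
  have hhigh : ∏ i ∈ range m, (q ^ (2 * m) + (q ^ 2) ^ (m + i) * q) =
      q ^ (2 * m ^ 2) * ∏ j ∈ range m, (1 + q ^ (2 * j + 1)) := by
    rw [show q ^ (2 * m ^ 2) = ∏ _i ∈ range m, q ^ (2 * m) by
      rw [prod_const, card_range, ← pow_mul]; ring_nf, ← prod_mul_distrib]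
    exact prod_congr rfl fun i _ => by ring
  have hterm : ∀ k ∈ range (2 * m + 1),
      gaussBinomial (q ^ 2) (2 * m) k * q ^ (k ^ 2 + 2 * m * (2 * m - k)) =
        gaussBinomial (q ^ 2) (2 * m) k * (q ^ 2) ^ k.choose 2 * (q ^ (2 * m)) ^ (2 * m - k) *
          q ^ k := by
    intro k _
    simp only [← pow_mul, mul_assoc, ← pow_add]
    rw [← two_mul_choose_two_add_self]
    ring_nf
  rw [sum_congr rfl hterm, ← prod_add_pow_mul_eq_sum_gaussBinomial, two_mul m, prod_range_add,
    ← two_mul, hlow, hhigh]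
  ring

end GaussianBinomial

section Coefficients

variable {R : Type*} [CommRing R]

lemma coeff_gaussBinomial_X_sq_mul_qPochhammer {k l M d : ℕ} (hk : d < 2 * k + 2)
    (hl : d < 2 * l + 2) (hM : d < 2 * M + 2) :
    (gaussBinomial (X ^ 2 : R[X]) (k + l) k * qPochhammer (X ^ 2) M).coeff d =
      if d = 0 then 1 else 0 := by
  have h := pow_succ_dvd_gaussBinomial_mul_qPochhammer_sub_one (X ^ 2 : R[X])
    (s := d / 2) (k := k) (l := l) (M := M) (by omega) (by omega) (by omega)
  rw [← pow_mul, X_pow_dvd_iff] at h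
  rw [← coeff_one, ← sub_eq_zero, ← coeff_sub]
  exact h d (by omega)

lemma coeff_gaussBinomial_mul_X_pow_mul_qPochhammer {n m k : ℕ} (hnm : n ≤ m) (hk : k ≤ 2 * m) :
    (gaussBinomial (X ^ 2 : R[X]) (2 * m) k * X ^ (k ^ 2 + 2 * m * (2 * m - k)) *
      qPochhammer (X ^ 2) m).coeff (n + 3 * m ^ 2) = if ((k : ℤ) - m) ^ 2 = n then 1 else 0 := by
  set e := k ^ 2 + 2 * m * (2 * m - k) with he_def
  have he : (e : ℤ) = ((k : ℤ) - m) ^ 2 + 3 * m ^ 2 := by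
    rw [he_def]; push_cast [hk]; ring
  rw [mul_comm _ (X ^ e), mul_assoc, coeff_X_pow_mul', ← Nat.add_sub_cancel' hk]
  by_cases hle : e ≤ n + 3 * m ^ 2
  · have hd : ((n + 3 * m ^ 2 - e : ℕ) : ℤ) = n - ((k : ℤ) - m) ^ 2 := by
      push_cast [hle]; linarith
    rw [if_pos hle, coeff_gaussBinomial_X_sq_mul_qPochhammer]
    · refine if_congr ?_ rfl rfl
      rw [← Int.natCast_inj, hd, Nat.cast_zero, sub_eq_zero, eq_comm]
    all_goals zify; rw [hd]; nlinarith [sq_nonneg ((k : ℤ) - m + 1), sq_nonneg ((k : ℤ) - m - 1)]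
  · rw [if_neg hle, if_neg]
    intro hsq
    exact hle (by zify; linarith)

lemma sum_range_ite_sub_sq_eq {n m : ℕ} (hn : 0 < n) (hnm : n ≤ m) :
    ∑ k ∈ range (2 * m + 1), (if ((k : ℤ) - m) ^ 2 = n then (1 : R) else 0) =
      if IsSquare n then 2 else 0 := by
  split_ifs with hsq
  · obtain ⟨r, rfl⟩ := hsq
    have hr : 0 < r := Nat.pos_of_mul_pos_left hn
    have hrm : r ≤ m := le_trans (Nat.le_mul_self r) hnm
    have hroots : {k ∈ range (2 * m + 1) | (((k : ℕ) : ℤ) - m) ^ 2 = ((r * r : ℕ) : ℤ)} =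
        ({m + r, m - r} : Finset ℕ) := by
      ext k
      rw [show ((r * r : ℕ) : ℤ) = (r : ℤ) ^ 2 by push_cast; ring]
      simp only [mem_filter, mem_range, mem_insert, mem_singleton, sq_eq_sq_iff_eq_or_eq_neg]
      omega
    rw [sum_boole, hroots, card_pair (by omega)]
    norm_num
  · refine sum_eq_zero fun k _ => if_neg fun h => hsq ⟨((k : ℤ) - m).natAbs, ?_⟩
    rw [← Int.natCast_inj, ← h]
    push_cast
    rw [abs_mul_abs_self, sq]

theorem coeff_prod_one_add_X_sq_mul_qPochhammer {n m : ℕ} (hn : 0 < n) (hnm : n ≤ m) :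
    ((∏ j ∈ range m, (1 + X ^ (2 * j + 1) : R[X])) ^ 2 * qPochhammer (X ^ 2) m).coeff n =
      if IsSquare n then 2 else 0 := by
  have h := congrArg (fun f => (f * qPochhammer (X ^ 2) m).coeff (n + 3 * m ^ 2))
    (pow_mul_prod_one_add_sq_eq_sum_gaussBinomial (X : R[X]) m)
  rw [mul_assoc, coeff_X_pow_mul, sum_mul, finsetSum_coeff] at h
  rw [h, ← sum_range_ite_sub_sq_eq hn hnm]
  refine sum_congr rfl fun k hk => ?_
  rw [coeff_gaussBinomial_mul_X_pow_mul_qPochhammer hnm (by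
    have := mem_range.mp hk; omega)]

end Coefficients

section TwoColorPartitions

lemma prod_one_add_C_mul_X_pow {R ι : Type*} [CommRing R] (s : Finset ι) (c : ι → R)
    (e : ι → ℕ) :
    ∏ i ∈ s, (1 + C (c i) * X ^ e i) = ∑ t ∈ s.powerset, C (∏ i ∈ t, c i) * X ^ ∑ i ∈ t, e i := by
  rw [prod_one_add]
  exact sum_congr rfl fun t _ => by rw [prod_mul_distrib, map_prod, prod_pow_eq_pow_sum]

lemma prod_Icc_one_two_mul {M : Type*} [CommMonoid M] (f : ℕ → M) (m : ℕ) :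
    ∏ x ∈ Icc 1 (2 * m), f x = ∏ k ∈ range m, f (2 * k + 1) * f (2 * k + 2) := by
  induction m with
  | zero => simp
  | succ m ih =>
    rw [show 2 * (m + 1) = 2 * m + 1 + 1 by ring, prod_Icc_succ_top (by omega),
      prod_Icc_succ_top (by omega), ih, prod_range_succ, mul_assoc]

def twoColorPartitions (L n : ℕ) : Finset (Finset ℕ × Finset ℕ) :=
  {p ∈ {x ∈ Icc 1 L | Odd x}.powerset ×ˢ (Icc 1 L).powerset |
    ∑ x ∈ p.1, x + ∑ x ∈ p.2, x = n}

lemma mem_twoColorPartitions {L n : ℕ} (hn : n ≤ L) {p : Finset ℕ × Finset ℕ} :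
    p ∈ twoColorPartitions L n ↔
      (∀ x ∈ p.1, Odd x ∧ 0 < x) ∧ (∀ x ∈ p.2, 0 < x) ∧ ∑ x ∈ p.1, x + ∑ x ∈ p.2, x = n := by
  simp only [twoColorPartitions, mem_filter, mem_product, mem_powerset, subset_iff, mem_Icc]
  constructor
  · rintro ⟨⟨hg, hb⟩, hsum⟩
    exact ⟨fun x hx => ⟨(hg hx).2, (hg hx).1.1⟩, fun x hx => (hb hx).1, hsum⟩
  · rintro ⟨hg, hb, hsum⟩
    have h₁ : ∀ x ∈ p.1, x ≤ n := fun x hx => by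
      have := single_le_sum (fun i _ => Nat.zero_le i) hx; omega
    have h₂ : ∀ x ∈ p.2, x ≤ n := fun x hx => by
      have := single_le_sum (fun i _ => Nat.zero_le i) hx; omega
    exact ⟨⟨fun x hx => ⟨⟨(hg x hx).2, (h₁ x hx).trans hn⟩, (hg x hx).1⟩,
      fun x hx => ⟨hb x hx, (h₂ x hx).trans hn⟩⟩, hsum⟩

lemma coeff_twoColorPartitions_genFun (R : Type*) [CommRing R] (L n : ℕ) :
    ((∏ x ∈ {x ∈ Icc 1 L | Odd x}, (1 + X ^ x)) *
        ∏ x ∈ Icc 1 L, (1 + C (if Even x then -1 else 1) * X ^ x) : R[X]).coeff n =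
      ∑ p ∈ twoColorPartitions L n, (-1) ^ #(p.2.filter fun x => Even x) := by
  have hgreen : ∏ x ∈ {x ∈ Icc 1 L | Odd x}, (1 + X ^ x : R[X]) =
      ∑ t ∈ {x ∈ Icc 1 L | Odd x}.powerset, X ^ ∑ x ∈ t, x := by
    simpa using prod_one_add_C_mul_X_pow {x ∈ Icc 1 L | Odd x} (fun _ => (1 : R)) id
  rw [hgreen, prod_one_add_C_mul_X_pow, sum_mul_sum, ← sum_product', finsetSum_coeff,
    twoColorPartitions, sum_filter]
  refine sum_congr rfl fun p _ => ?_
  rw [mul_left_comm, ← pow_add, coeff_C_mul_X_pow, prod_ite, prod_const, prod_const_one, mul_one,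
    eq_comm]
  exact if_congr eq_comm rfl rfl

lemma twoColorPartitions_genFun_eq (R : Type*) [CommRing R] (m : ℕ) :
    (∏ x ∈ {x ∈ Icc 1 (2 * m) | Odd x}, (1 + X ^ x)) *
        ∏ x ∈ Icc 1 (2 * m), (1 + C (if Even x then -1 else 1) * X ^ x) =
      (∏ j ∈ range m, (1 + X ^ (2 * j + 1) : R[X])) ^ 2 * qPochhammer (X ^ 2) m := by
  rw [prod_filter, prod_Icc_one_two_mul, prod_Icc_one_two_mul, qPochhammer, sq,
    mul_assoc, ← prod_mul_distrib, ← prod_mul_distrib, ← prod_mul_distrib]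
  refine prod_congr rfl fun k _ => ?_
  have h₁ : ¬ Even (2 * k + 1) := by simp [parity_simps]
  have h₂ : Even (2 * k + 2) := by simp [parity_simps]
  simp only [h₁, h₂, if_true, if_false, Nat.not_even_iff_odd.mp h₁, Nat.not_odd_iff_even.mpr h₂,
    map_neg, map_one]
  ring

end TwoColorPartitions

lemma natCard_even_sub_natCard_odd {α : Type*} (s : Finset α) (f : α → ℕ) :
    (Nat.card {a // a ∈ s ∧ Even (f a)} : ℤ) - Nat.card {a // a ∈ s ∧ Odd (f a)} =
      ∑ a ∈ s, (-1) ^ f a := by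
  classical
  have hcard (P : α → Prop) [DecidablePred P] : Nat.card {a // a ∈ s ∧ P a} = #{a ∈ s | P a} := by
    rw [← Nat.card_eq_finsetCard]
    exact Nat.card_congr (Equiv.subtypeEquivRight fun a => mem_filter.symm)
  rw [hcard, hcard, ← sum_filter_add_sum_filter_not s (fun a => Even (f a)),
    sum_congr rfl fun a ha => (mem_filter.mp ha).2.neg_one_pow,
    sum_congr rfl fun a ha => (Nat.not_even_iff_odd.mp (mem_filter.mp ha).2).neg_one_pow]
  simp [sub_eq_add_neg, Nat.not_even_iff_odd]

/-- For `n ≥ 1`, as integers, `E₀(n) − E₁(n)` equals `2` if `n` is a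
perfect square and `0` otherwise. Here `E₀(n)` (resp. `E₁(n)`) counts two-color
partitions `(g, b)` of `n` (with `g` a finite set of distinct odd positive integers
and `b` a finite set of distinct positive integers) whose number of even parts
(even elements of `b`) is even (resp. odd). -/
theorem two_color_even_parts_parity_difference (n : ℕ) (hn : 0 < n) :
    (Nat.card {p : Finset ℕ × Finset ℕ //
      ((∀ x ∈ p.1, Odd x ∧ 0 < x) ∧ (∀ x ∈ p.2, 0 < x) ∧
        (∑ x ∈ p.1, x) + (∑ x ∈ p.2, x) = n) ∧
      Even (p.2.filter (fun x => Even x)).card} : ℤ) -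
    (Nat.card {p : Finset ℕ × Finset ℕ //
      ((∀ x ∈ p.1, Odd x ∧ 0 < x) ∧ (∀ x ∈ p.2, 0 < x) ∧
        (∑ x ∈ p.1, x) + (∑ x ∈ p.2, x) = n) ∧
      Odd (p.2.filter (fun x => Even x)).card} : ℤ) =
    (if IsSquare n then 2 else 0) := by
  simp only [← mem_twoColorPartitions (show n ≤ 2 * n by omega)]
  rw [natCard_even_sub_natCard_odd, ← coeff_twoColorPartitions_genFun,
    twoColorPartitions_genFun_eq, coeff_prod_one_add_X_sq_mul_qPochhammer hn le_rfl]
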